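/- arXiv:math/0211389 — 3 statements merged into one kernel-verified Lean document; each statement's English description precedes it below -/
import Mathlib

section
/- Let π : A → B be a groupoid covering between groupoids with finite automorphism groups, let y be an object of B and x an object of A with π(x) = y. Then |Aut(y)| / |Aut(x)| equals the cardinality of the set [x]_y of objects of A over y isomorphic to x. -/
open CategoryTheory

/-- A groupoid covering: a functor with unique lifting of morphisms. -/
def IsGroupoidCovering {A B : Type*} [Groupoid A] [Groupoid B] (π : A ⥤ B) : Prop :=
  ∀ (x₁ : A) (y₂ : B) (φ : π.obj x₁ ⟶ y₂),
    ∃! p : (x₂ : A) × (x₁ ⟶ x₂), ∃ h : π.obj p.1 = y₂, π.map p.2 ≫ eqToHom h = φ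

/-! The morphisms of `A` out of `x` ending over `y` are counted twice: unique lifting matches them
with `π.obj x ⟶ y`, and sorting them by target splits them into one `Aut x`-torsor for each object
over `y` in the isomorphism class of `x`. With `y = π x` this gives `|Aut y| = |[x]_y| · |Aut x|`. -/

namespace CategoryTheory.Groupoid

variable {C : Type*} [Groupoid C]

def homSubtypeEquivSigma (P : C → Prop) (x : C) :
    {p : (x' : C) × (x ⟶ x') // P p.1} ≃ Σ x' : {x' : C // P x' ∧ Nonempty (x' ≅ x)}, (x ⟶ x'.1)
    where
  toFun q := ⟨⟨q.1.1, q.2, ⟨(asIso q.1.2).symm⟩⟩, q.1.2⟩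
  invFun p := ⟨⟨p.1.1, p.2⟩, p.1.2.1⟩
  left_inv _ := rfl
  right_inv _ := rfl

noncomputable def homSubtypeEquivProdAut (P : C → Prop) (x : C) :
    {p : (x' : C) × (x ⟶ x') // P p.1} ≃ {x' : C // P x' ∧ Nonempty (x' ≅ x)} × (x ⟶ x) :=
  (homSubtypeEquivSigma P x).trans <|
    (Equiv.sigmaCongrRight fun x' => (Iso.refl x).homCongr (Classical.choice x'.2.2)).trans
      (Equiv.sigmaEquivProd _ _)

theorem card_homSubtype (P : C → Prop) (x : C) :
    Nat.card {p : (x' : C) × (x ⟶ x') // P p.1} =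
      Nat.card {x' : C // P x' ∧ Nonempty (x' ≅ x)} * Nat.card (x ⟶ x) := by
  rw [Nat.card_congr (homSubtypeEquivProdAut P x), Nat.card_prod]

end CategoryTheory.Groupoid

namespace IsGroupoidCovering

variable {A B : Type*} [Groupoid A] [Groupoid B] {π : A ⥤ B}

theorem bijective_map_lift (hπ : IsGroupoidCovering π) (x : A) (y : B) :
    Function.Bijective fun q : {p : (x' : A) × (x ⟶ x') // π.obj p.1 = y} =>
      π.map q.1.2 ≫ eqToHom q.2 := by
  refine ⟨fun q q' h => Subtype.ext ((hπ x y _).unique ⟨q.2, rfl⟩ ⟨q'.2, h.symm⟩), fun φ => ?_⟩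
  obtain ⟨p, ⟨h, hp⟩, -⟩ := hπ x y φ
  exact ⟨⟨p, h⟩, hp⟩

theorem card_hom_eq_card_lift (hπ : IsGroupoidCovering π) (x : A) (y : B) :
    Nat.card (π.obj x ⟶ y) = Nat.card {p : (x' : A) × (x ⟶ x') // π.obj p.1 = y} :=
  (Nat.card_congr (Equiv.ofBijective _ (hπ.bijective_map_lift x y))).symm

end IsGroupoidCovering

/-- `|Aut y| / |Aut x|` equals the number of objects of `A` lying over `y`
which are isomorphic to `x`. -/
theorem card_aut_div_card_aut_eq_card_fiber_isoClass {A B : Type*}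
    [Groupoid A] [Groupoid B]
    [∀ a : A, Finite (a ⟶ a)] [∀ b : B, Finite (b ⟶ b)]
    (π : A ⥤ B) (hπ : IsGroupoidCovering π) (y : B) (x : A) (hx : π.obj x = y) :
    Nat.card (y ⟶ y) / Nat.card (x ⟶ x) =
      Nat.card {x' : A // π.obj x' = y ∧ Nonempty (x' ≅ x)} := by
  subst hx
  have : Nonempty (x ⟶ x) := ⟨𝟙 x⟩
  rw [hπ.card_hom_eq_card_lift, Groupoid.card_homSubtype (π.obj · = π.obj x),
    Nat.mul_div_cancel _ Nat.card_pos]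
end

section
/- Let π : A → B be a finite groupoid covering between groupoids with finite automorphism groups. For an object y of B, the degree deg π(y) := |{objects x of A with π(x) = y}| satisfies deg π(y) = Σ_{[x] ∈ π⁻¹([y])} |[x]_y| = Σ_{[x] ∈ π⁻¹([y])} |Aut(y)| / |Aut(x)|, where the sum ranges over isomorphism classes of objects of A mapping to the isomorphism class of y. -/
/-!
Unique lifting identifies the morphisms out of `x` into the fiber over `y = π x` with `Aut y`.
Grouped by their target, these morphisms are `|Aut x|` for each object of `[x]_y` and none
for the other objects of the fiber, so `|[x]_y| * |Aut x| = |Aut y|`. The degree is the sum of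
the sizes `|[x]_y|` of the isomorphism classes partitioning the fiber.
-/

open CategoryTheory

/-- Isomorphism (in `A`) of objects of the fiber of `π` over `y`, as a setoid. -/
def fiberIsoSetoid {A B : Type*} [Groupoid A] [Groupoid B] (π : A ⥤ B) (y : B) :
    Setoid {x : A // π.obj x = y} where
  r a b := Nonempty (a.1 ≅ b.1)
  iseqv := ⟨fun a => ⟨Iso.refl a.1⟩, fun ⟨e⟩ => ⟨e.symm⟩, fun ⟨e⟩ ⟨f⟩ => ⟨e.trans f⟩⟩

namespace CategoryTheory.Groupoid

variable {A : Type*} [Groupoid A]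

/-- Both directions compose with the same isomorphism `x' ≅ x`, chosen from the proof-irrelevant
`Nonempty (x' ≅ x)`; this is what makes them mutually inverse. -/
noncomputable def sigmaHomEquivProdAut (P : A → Prop) (x : A) :
    (Σ x₂ : {x' : A // P x'}, x ⟶ x₂.1) ≃ {x' : A // P x' ∧ Nonempty (x' ≅ x)} × (x ⟶ x) where
  toFun p := (⟨p.1.1, p.1.2, ⟨(asIso p.2).symm⟩⟩, p.2 ≫ (Classical.choice ⟨(asIso p.2).symm⟩).hom)
  invFun q := ⟨⟨q.1.1, q.1.2.1⟩, q.2 ≫ (Classical.choice q.1.2.2).inv⟩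
  left_inv _ := by simp
  right_inv _ := by simp

end CategoryTheory.Groupoid

namespace IsGroupoidCovering

variable {A B : Type*} [Groupoid A] [Groupoid B] {π : A ⥤ B}

noncomputable def sigmaHomEquiv (hπ : IsGroupoidCovering π) (x : A) (y : B) :
    (Σ x₂ : {x' : A // π.obj x' = y}, x ⟶ x₂.1) ≃ (π.obj x ⟶ y) :=
  Equiv.ofBijective (fun p => π.map p.2 ≫ eqToHom p.1.2) <| by
    refine ⟨?_, fun φ => ?_⟩
    · rintro ⟨⟨x₂, h₂⟩, f₂⟩ ⟨⟨x₃, h₃⟩, f₃⟩ hf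
      obtain ⟨_, -, unique⟩ := hπ x y (π.map f₂ ≫ eqToHom h₂)
      obtain ⟨rfl, hf⟩ := Sigma.mk.inj_iff.mp
        ((unique ⟨x₂, f₂⟩ ⟨h₂, rfl⟩).trans (unique ⟨x₃, f₃⟩ ⟨h₃, hf.symm⟩).symm)
      rw [eq_of_heq hf]
    · obtain ⟨⟨x₂, f⟩, ⟨h, hf⟩, -⟩ := hπ x y φ
      exact ⟨⟨⟨x₂, h⟩, f⟩, hf⟩

theorem card_isoClass (hπ : IsGroupoidCovering π) {x : A} {y : B} [Finite (x ⟶ x)]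
    (hx : π.obj x = y) :
    Nat.card {x' : A // π.obj x' = y ∧ Nonempty (x' ≅ x)} =
      Nat.card (y ⟶ y) / Nat.card (x ⟶ x) := by
  subst hx
  have := Nat.card_congr ((hπ.sigmaHomEquiv x (π.obj x)).symm.trans
    (Groupoid.sigmaHomEquivProdAut (fun x' => π.obj x' = π.obj x) x))
  rw [this, Nat.card_prod, Nat.mul_div_cancel _ Nat.card_pos]

end IsGroupoidCovering

section IsoClasses

variable {A B : Type*} [Groupoid A] [Groupoid B] (π : A ⥤ B) (y : B)

def fiberEquivSigmaIsoClass (rep : Quotient (fiberIsoSetoid π y) → {x : A // π.obj x = y})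
    (hrep : ∀ q, Quotient.mk (fiberIsoSetoid π y) (rep q) = q) :
    {x : A // π.obj x = y} ≃
      Σ q : Quotient (fiberIsoSetoid π y), {x' : A // π.obj x' = y ∧ Nonempty (x' ≅ (rep q).1)} :=
  (Equiv.sigmaFiberEquiv (Quotient.mk (fiberIsoSetoid π y))).symm.trans <|
    Equiv.sigmaCongrRight fun q =>
      (Equiv.subtypeEquivRight fun a =>
        show Quotient.mk _ a = q ↔ Nonempty (a.1 ≅ (rep q).1) by
          conv_lhs => rw [← hrep q]
          exact Quotient.eq).trans
        (Equiv.subtypeSubtypeEquivSubtypeInter (fun x => π.obj x = y)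
          fun x => Nonempty (x ≅ (rep q).1))

theorem card_fiber_eq_finsum_card_isoClass [Finite {x : A // π.obj x = y}]
    (rep : Quotient (fiberIsoSetoid π y) → {x : A // π.obj x = y})
    (hrep : ∀ q, Quotient.mk (fiberIsoSetoid π y) (rep q) = q) :
    Nat.card {x : A // π.obj x = y} =
      ∑ᶠ q : Quotient (fiberIsoSetoid π y),
        Nat.card {x' : A // π.obj x' = y ∧ Nonempty (x' ≅ (rep q).1)} := by
  have := Fintype.ofFinite (Quotient (fiberIsoSetoid π y))
  have e := fiberEquivSigmaIsoClass π y rep hrep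
  have : ∀ q, Finite {x' : A // π.obj x' = y ∧ Nonempty (x' ≅ (rep q).1)} := fun q =>
    Finite.of_injective (fun a => e.symm ⟨q, a⟩) (e.symm.injective.comp sigma_mk_injective)
  rw [Nat.card_congr e, Nat.card_sigma, finsum_eq_sum_of_fintype]

end IsoClasses

/-- For a finite groupoid covering, the degree over `y` (the number of objects in the
fiber over `y`) equals the sum, over the isomorphism classes `[x]` of objects of the
fiber, of `|[x]_y|`, and also the sum of `|Aut y| / |Aut x|`. -/
theorem degree_eq_sum_over_isoClasses {A B : Type*} [Groupoid A] [Groupoid B]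
    [∀ a : A, Finite (a ⟶ a)] [∀ b : B, Finite (b ⟶ b)]
    (π : A ⥤ B) (hπ : IsGroupoidCovering π)
    (hfin : ∀ y : B, Finite {x : A // π.obj x = y})
    (y : B)
    (rep : Quotient (fiberIsoSetoid π y) → {x : A // π.obj x = y})
    (hrep : ∀ q, Quotient.mk (fiberIsoSetoid π y) (rep q) = q) :
    Nat.card {x : A // π.obj x = y} =
      ∑ᶠ q : Quotient (fiberIsoSetoid π y),
        Nat.card {x' : A // π.obj x' = y ∧ Nonempty (x' ≅ (rep q).1)} ∧
    Nat.card {x : A // π.obj x = y} =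
      ∑ᶠ q : Quotient (fiberIsoSetoid π y),
        Nat.card (y ⟶ y) / Nat.card ((rep q).1 ⟶ (rep q).1) := by
  have := hfin y
  have hdeg := card_fiber_eq_finsum_card_isoClass π y rep hrep
  refine ⟨hdeg, hdeg.trans (finsum_congr fun q => ?_)⟩
  exact hπ.card_isoClass (rep q).2
end

section
/- Let A be a groupoid with finite automorphism groups and let S_n denote the simply connected groupoid on the set of elements of the symmetric group S_n (all objects uniquely isomorphic). The functor π : A^{×n} × S_n → Sym_n(A) sending (x₁,…,xₙ,σ) to (x_{σ(1)},…,x_{σ(n)}) is a homogeneous groupoid covering of degree n!. -/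
open CategoryTheory

private theorem eqToHom_heq_id {C : Type*} [Category C] {a b : C}
    (p : a = b) : HEq (eqToHom p) (𝟙 a) := by
  cases p; rfl

/-- The objects of the symmetric power groupoid `Sym_n(A)`. -/
structure SymObj (A : Type*) (n : ℕ) where
  obj : Fin n → A

/-- The symmetric power groupoid `Sym_n(A) = A^{×n}/S_n`. -/
instance symGroupoid (A : Type*) [Groupoid A] (n : ℕ) : Groupoid (SymObj A n) where
  Hom x y := (σ : Equiv.Perm (Fin n)) × (∀ i, x.obj i ⟶ y.obj (σ i))
  id x := ⟨1, fun i => 𝟙 (x.obj i)⟩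
  comp f g := ⟨g.1 * f.1, fun i => f.2 i ≫ g.2 (f.1 i)⟩
  id_comp f := by cases f; simp <;> rfl
  comp_id f := by cases f; simp <;> rfl
  assoc f g h := by cases f; cases g; cases h; simp [mul_assoc] <;> rfl
  inv f := ⟨f.1⁻¹, fun i =>
    eqToHom (congrArg _ (show f.1 (f.1⁻¹ i) = i from f.1.apply_symm_apply i).symm) ≫ Groupoid.inv (f.2 (f.1⁻¹ i))⟩
  inv_comp f := by
    rcases f with ⟨σ, f⟩
    have h1 : σ * σ⁻¹ = 1 := by group
    refine Sigma.ext h1 (Function.hfunext rfl fun i j hij => ?_)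
    obtain rfl : i = j := eq_of_heq hij
    simp only [CategoryTheory.Category.assoc]
    simpa using eqToHom_heq_id _
  comp_inv f := by
    rcases f with ⟨σ, f⟩
    have h1 : σ⁻¹ * σ = 1 := by group
    refine Sigma.ext h1 (Function.hfunext rfl fun i j hij => ?_)
    obtain rfl : i = j := eq_of_heq hij
    simp only [CategoryTheory.Category.assoc]
    simpa using eqToHom_heq_id _

/-- The simply connected groupoid on a set `S`: exactly one morphism between any two
objects. -/
structure SConn (S : Type*) where
  elem : S

instance sconnGroupoid (S : Type*) : Groupoid (SConn S) where
  Hom _ _ := Unit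
  id _ := ()
  comp _ _ := ()
  inv _ := ()

/-- The objects of the product groupoid `A^{×n} × S_n`. -/
structure ProdObj (A : Type*) (n : ℕ) where
  tuple : Fin n → A
  perm : SConn (Equiv.Perm (Fin n))

/-- The product groupoid `A^{×n} × S_n`, where `A^{×n}` is the `n`-fold product groupoid
(componentwise morphisms) and `S_n` is the simply connected groupoid on the symmetric
group. -/
instance prodGroupoid (A : Type*) [Groupoid A] (n : ℕ) : Groupoid (ProdObj A n) where
  Hom x y := ((∀ i, x.tuple i ⟶ y.tuple i) × (x.perm ⟶ y.perm))
  id x := ⟨fun i => 𝟙 (x.tuple i), 𝟙 x.perm⟩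
  comp f g := ⟨fun i => f.1 i ≫ g.1 i, f.2 ≫ g.2⟩
  id_comp f := by cases f; simp
  comp_id f := by cases f; simp
  assoc f g h := by simp
  inv f := ⟨fun i => Groupoid.inv (f.1 i), Groupoid.inv f.2⟩
  inv_comp f := by cases f; simp
  comp_inv f := by cases f; simp

/-- The functor `A^{×n} × S_n ⥤ Sym_n(A)`, `(x₁,…,xₙ,σ) ↦ (x_{σ 1},…,x_{σ n})`. -/
def symCoveringFunctor (A : Type*) [Groupoid A] (n : ℕ) : ProdObj A n ⥤ SymObj A n where
  obj x := ⟨fun i => x.tuple (x.perm.elem i)⟩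
  map {X Y} f :=
    ⟨Y.perm.elem⁻¹ * X.perm.elem, fun i =>
      f.1 (X.perm.elem i) ≫
        eqToHom (congrArg Y.tuple (show Y.perm.elem (Y.perm.elem⁻¹ (X.perm.elem i)) = X.perm.elem i from
          Y.perm.elem.apply_symm_apply (X.perm.elem i)).symm)⟩
  map_id x := by
    refine Sigma.ext (show x.perm.elem⁻¹ * x.perm.elem = 1 by group)
      (Function.hfunext rfl fun i j hij => ?_)
    obtain rfl : i = j := eq_of_heq hij
    show HEq (𝟙 (x.tuple (x.perm.elem i)) ≫ eqToHom _) (𝟙 _)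
    simp only [CategoryTheory.Category.id_comp]
    exact eqToHom_heq_id _
  map_comp {X Y Z} f g := by
    refine Sigma.ext
      (show Z.perm.elem⁻¹ * X.perm.elem =
        (Z.perm.elem⁻¹ * Y.perm.elem) * (Y.perm.elem⁻¹ * X.perm.elem) by group)
      (Function.hfunext rfl fun i j hij => ?_)
    obtain rfl : i = j := eq_of_heq hij
    show HEq
      ((f.1 (X.perm.elem i) ≫ g.1 (X.perm.elem i)) ≫
        eqToHom (congrArg Z.tuple
          (show Z.perm.elem (Z.perm.elem⁻¹ (X.perm.elem i)) = X.perm.elem i from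
            Z.perm.elem.apply_symm_apply (X.perm.elem i)).symm))
      ((f.1 (X.perm.elem i) ≫
          eqToHom (congrArg Y.tuple
            (show Y.perm.elem (Y.perm.elem⁻¹ (X.perm.elem i)) = X.perm.elem i from
              Y.perm.elem.apply_symm_apply (X.perm.elem i)).symm)) ≫
        (g.1 (Y.perm.elem (Y.perm.elem⁻¹ (X.perm.elem i))) ≫
          eqToHom (congrArg Z.tuple
            (show Z.perm.elem (Z.perm.elem⁻¹ (Y.perm.elem (Y.perm.elem⁻¹ (X.perm.elem i)))) =
                Y.perm.elem (Y.perm.elem⁻¹ (X.perm.elem i)) from Z.perm.elem.apply_symm_apply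
              (Y.perm.elem (Y.perm.elem⁻¹ (X.perm.elem i)))).symm)))
    have key : ∀ {a b : Fin n} (e : a = b) {W : A} (h : Z.tuple b ⟶ W),
        eqToHom (congrArg Y.tuple e) ≫ g.1 b ≫ h =
          g.1 a ≫ eqToHom (congrArg Z.tuple e) ≫ h := by
      rintro a b rfl W h; simp
    rw [CategoryTheory.Category.assoc (f.1 (X.perm.elem i)) (eqToHom _),
      key (show X.perm.elem i = Y.perm.elem (Y.perm.elem⁻¹ (X.perm.elem i)) from
        (show Y.perm.elem (Y.perm.elem⁻¹ (X.perm.elem i)) = X.perm.elem i from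
          Y.perm.elem.apply_symm_apply _).symm),
      eqToHom_trans]
    refine (comp_eqToHom_heq _ _).trans ?_
    rw [← CategoryTheory.Category.assoc]
    exact (comp_eqToHom_heq _ _).symm

private theorem sym_comp_eqToHom {A : Type*} [Groupoid A] {n : ℕ} {X Y Z : SymObj A n}
    (m : X ⟶ Y) (h : Y = Z) :
    m ≫ eqToHom h =
      ⟨m.1, fun i => m.2 i ≫ eqToHom (congrArg (fun W => SymObj.obj W (m.1 i)) h)⟩ := by
  cases h
  show m ≫ 𝟙 Y = _
  rw [Category.comp_id]
  exact Sigma.ext rfl (by simp)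

private theorem symCoveringFunctor_map_inj {A : Type*} [Groupoid A] {n : ℕ}
    {X Y : ProdObj A n} (m m' : X ⟶ Y)
    (hm : (symCoveringFunctor A n).map m = (symCoveringFunctor A n).map m') : m = m' := by
  obtain ⟨m1, m2⟩ := m
  obtain ⟨m1', m2'⟩ := m'
  have h2 : (fun i => m1 (X.perm.elem i) ≫ eqToHom (congrArg Y.tuple
        (Y.perm.elem.apply_symm_apply (X.perm.elem i)).symm)) =
      (fun i => m1' (X.perm.elem i) ≫ eqToHom (congrArg Y.tuple
        (Y.perm.elem.apply_symm_apply (X.perm.elem i)).symm)) :=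
    eq_of_heq (Sigma.ext_iff.mp hm).2
  refine Prod.ext ?_ (@Subsingleton.elim Unit _ m2 m2')
  funext j
  have h3 := congrFun h2 (X.perm.elem⁻¹ j)
  have h4 := (cancel_mono (eqToHom (congrArg Y.tuple
      (Y.perm.elem.apply_symm_apply (X.perm.elem (X.perm.elem⁻¹ j))).symm))).mp h3
  rwa [(show ∀ (e : Equiv.Perm (Fin n)) x, e (e⁻¹ x) = x from fun e x => e.apply_symm_apply x)] at h4

/-- The functor `A^{×n} × S_n → Sym_n(A)` is a homogeneous groupoid covering of
degree `n!`. -/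
theorem symCovering_is_covering {A : Type*} [Groupoid A] [∀ a : A, Finite (a ⟶ a)]
    (n : ℕ) :
    IsGroupoidCovering (symCoveringFunctor A n) ∧
    ∀ ξ : SymObj A n,
      Nat.card {p : ProdObj A n // (symCoveringFunctor A n).obj p = ξ} = n.factorial := by
  constructor
  · rintro ⟨t, ⟨σ⟩⟩ ⟨ξo⟩ ⟨τ, f⟩
    -- candidate lift
    set X₂ : ProdObj A n := ⟨fun j => ξo (τ (σ⁻¹ j)), ⟨σ * τ⁻¹⟩⟩ with hX₂
    set gc : ∀ j, t j ⟶ X₂.tuple j := fun j =>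
      eqToHom (congrArg t (σ.apply_symm_apply j).symm) ≫ f (σ⁻¹ j) with hgc
    have hZ : (symCoveringFunctor A n).obj X₂ = ⟨ξo⟩ :=
      congrArg SymObj.mk (funext fun i => by simp [X₂, Equiv.Perm.mul_apply])
    have hmain : (symCoveringFunctor A n).map
        (⟨gc, ()⟩ : (⟨t, ⟨σ⟩⟩ : ProdObj A n) ⟶ X₂) ≫ eqToHom hZ = ⟨τ, f⟩ := by
      rw [sym_comp_eqToHom]
      refine Sigma.ext (by show (σ * τ⁻¹)⁻¹ * σ = τ; group)
        (Function.hfunext rfl fun i j hij => ?_)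
      obtain rfl : i = j := eq_of_heq hij
      show HEq (((eqToHom _ ≫ f (σ⁻¹ (σ i))) ≫ eqToHom _) ≫ eqToHom _) (f i)
      refine (comp_eqToHom_heq _ _).trans ((comp_eqToHom_heq _ _).trans
        ((eqToHom_comp_heq _ _).trans ?_))
      exact congr_arg_heq f (σ.symm_apply_apply i)
    refine ⟨⟨X₂, ⟨gc, ()⟩⟩, ⟨hZ, hmain⟩, ?_⟩
    rintro ⟨⟨s, ⟨ρ⟩⟩, g, u⟩ ⟨h, eq⟩
    have eq' := eq
    rw [sym_comp_eqToHom] at eq'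
    have hperm : ρ⁻¹ * σ = τ := congrArg Sigma.fst eq'
    have hρ : ρ = σ * τ⁻¹ := by rw [← hperm]; group
    subst hρ
    obtain rfl : s = fun j => ξo (τ (σ⁻¹ j)) := by
      funext j
      have h1 := congrFun (congrArg SymObj.obj h) ((σ * τ⁻¹)⁻¹ j)
      simp only [symCoveringFunctor] at h1
      rw [(show ∀ (e : Equiv.Perm (Fin n)) x, e (e⁻¹ x) = x from fun e x => e.apply_symm_apply x)] at h1
      simpa [mul_inv_rev, Equiv.Perm.mul_apply] using h1
    have hmap : (symCoveringFunctor A n).map (⟨g, u⟩ : (⟨t, ⟨σ⟩⟩ : ProdObj A n) ⟶ X₂) =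
        (symCoveringFunctor A n).map ⟨gc, ()⟩ := by
      refine (cancel_mono (eqToHom hZ)).mp ?_
      exact eq.trans hmain.symm
    exact congrArg (Sigma.mk X₂) (symCoveringFunctor_map_inj _ _ hmap)
  · rintro ⟨ξo⟩
    have e : {p : ProdObj A n // (symCoveringFunctor A n).obj p = ⟨ξo⟩} ≃
        Equiv.Perm (Fin n) :=
      { toFun := fun p => p.1.perm.elem
        invFun := fun ρ => ⟨⟨fun j => ξo (ρ⁻¹ j), ⟨ρ⟩⟩,
          congrArg SymObj.mk (funext fun i => by simp)⟩
        left_inv := by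
          rintro ⟨⟨s, ⟨ρ⟩⟩, h⟩
          refine Subtype.ext ?_
          show (⟨fun j => ξo (ρ⁻¹ j), ⟨ρ⟩⟩ : ProdObj A n) = ⟨s, ⟨ρ⟩⟩
          have hs := congrArg SymObj.obj h
          congr 1
          funext j
          have h1 := congrFun hs (ρ⁻¹ j)
          simp only [symCoveringFunctor] at h1
          rw [(show ∀ (e : Equiv.Perm (Fin n)) x, e (e⁻¹ x) = x from fun e x => e.apply_symm_apply x)] at h1
          exact h1.symm
        right_inv := fun ρ => rfl }
    rw [Nat.card_congr e, Nat.card_eq_fintype_card, Fintype.card_perm, Fintype.card_fin]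
end
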